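/- arXiv:2107.07401 — 6 statements merged into one kernel-verified Lean document; each statement's English description precedes it below -/
import Mathlib

section
/- Let M ⊆ {0, 1, …, n−1} be a union of cyclotomic cosets that contains d − 1 consecutive integers b0, b0+1, …, b0+d−2 (for some b0 and some d ≥ 2), and let C = { c(x) ∈ F_2[x] : deg c < n and c(α^j) = 0 for all j ∈ M } be the corresponding binary BCH code. Then every nonzero codeword of C has Hamming weight at least d; that is, the minimum distance of C is at least the designed distance d (BCH bound). -/
/-!
Suppose `c` has `w ≤ d - 1` nonzero coefficients, at exponents `i ∈ S`. The vanishing of `c` at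
`α ^ (b0 + t)` for `t < w` says that the vector `(c_i α^(b0 i))_{i ∈ S}` is killed by the
Vandermonde matrix of the nodes `α ^ i`, `i ∈ S`. These nodes are distinct because every `i` is
below `deg c < orderOf α`, so the matrix is invertible and all `c_i` vanish, a contradiction.
-/

open Polynomial Finset

theorem Finset.eq_zero_of_forall_pow_sum_mul_pow_eq_zero {R ι : Type*} [CommRing R] [IsDomain R]
    {s : Finset ι} {f v : ι → R} (hf : Set.InjOn f s)
    (hfv : ∀ t < #s, ∑ i ∈ s, v i * f i ^ t = 0) : ∀ i ∈ s, v i = 0 := by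
  let e := s.equivFin
  have hinj : Function.Injective fun k => f (e.symm k) := fun k l hkl =>
    e.symm.injective <| Subtype.ext <| hf (e.symm k).2 (e.symm l).2 hkl
  have hzero : (fun k => v (e.symm k)) = 0 := by
    refine Matrix.eq_zero_of_forall_pow_sum_mul_pow_eq_zero hinj fun t => ?_
    rw [← hfv t t.2, ← sum_coe_sort s]
    exact e.symm.sum_comp fun i : s => v i * f i ^ (t : ℕ)
  intro i hi
  simpa [e] using congrFun hzero (e ⟨i, hi⟩)

theorem Polynomial.aeval_eq_sum_support {K L : Type*} [CommSemiring K] [Semiring L] [Algebra K L]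
    (c : K[X]) (x : L) : aeval x c = ∑ i ∈ c.support, algebraMap K L (c.coeff i) * x ^ i := by
  rw [aeval_def, eval₂_eq_sum, sum_def]

theorem Polynomial.card_support_gt_of_aeval_pow_eq_zero {K L : Type*} [Field K] [Field L]
    [Algebra K L] {α : L} {c : K[X]} (hc0 : c ≠ 0) (hcdeg : c.degree < orderOf α) {b δ : ℕ}
    (hroot : ∀ t < δ, aeval (α ^ (b + t)) c = 0) : δ < #c.support := by
  by_contra! hcard
  have hdeg : c.natDegree < orderOf α := (natDegree_lt_iff_degree_lt hc0).2 hcdeg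
  have hlt : ∀ i ∈ c.support, i < orderOf α := fun i hi =>
    (le_natDegree_of_mem_supp i hi).trans_lt hdeg
  have hα0 : α ≠ 0 := by rintro rfl; simp at hdeg
  have hvanish := Finset.eq_zero_of_forall_pow_sum_mul_pow_eq_zero
    (v := fun i => algebraMap K L (c.coeff i) * α ^ (b * i))
    (pow_injOn_Iio_orderOf.mono fun i hi => hlt i hi) fun t ht => by
      rw [← hroot t (ht.trans_le hcard), aeval_eq_sum_support]
      refine sum_congr rfl fun i _ => ?_
      rw [mul_assoc, ← pow_mul, ← pow_add, ← pow_mul]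
      ring
  obtain ⟨i, hi⟩ := support_nonempty.2 hc0
  exact mem_support_iff.1 hi <| by simpa [hα0] using hvanish i hi

theorem bch_bound_general (m n d b0 : ℕ)
    (α : GaloisField 2 m) (hα : orderOf α = n)
    (M : Finset ℕ)
    (hconsec : ∀ t < d - 1, b0 + t ∈ M)
    (c : Polynomial (ZMod 2)) (hcdeg : c.degree < (n : ℕ))
    (hcroot : ∀ j ∈ M, Polynomial.aeval (α ^ j) c = 0)
    (hc0 : c ≠ 0) :
    d ≤ c.support.card := by
  have := card_support_gt_of_aeval_pow_eq_zero hc0 (hα ▸ hcdeg)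
    fun t ht => hcroot _ (hconsec t ht)
  omega

/-- **BCH bound.**  Let `n = 2^m − 1`, `α` a primitive element of `F_{2^m}`, and
`M ⊆ {0, …, n−1}` a union of cyclotomic cosets containing the `d − 1` consecutive
integers `b0, b0+1, …, b0+d−2` (for some `d ≥ 2`).  Then every nonzero polynomial
`c ∈ F_2[x]` of degree `< n` with `c(α^j) = 0` for all `j ∈ M` has at least `d`
nonzero coefficients, i.e. the minimum distance of the BCH code is at least the
designed distance `d`. -/
theorem bch_bound (m n d b0 : ℕ) (hm : 1 ≤ m) (hn : n = 2 ^ m - 1) (hd : 2 ≤ d)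
    (α : GaloisField 2 m) (hα : orderOf α = n)
    (M : Finset ℕ) (hMn : ∀ i ∈ M, i < n)
    (hM : ∀ i ∈ M, ∀ j, i * 2 ^ j % n ∈ M)
    (hconsec : ∀ t < d - 1, b0 + t ∈ M)
    (c : Polynomial (ZMod 2)) (hcdeg : c.degree < (n : ℕ))
    (hcroot : ∀ j ∈ M, Polynomial.aeval (α ^ j) c = 0)
    (hc0 : c ≠ 0) :
    d ≤ c.support.card :=
  bch_bound_general m n d b0 α hα M hconsec c hcdeg hcroot hc0
end

section
/- Fix b(x) ∈ F_2[x] of degree less than n with exactly δ nonzero coefficients, and fix 0 ≤ τ ≤ n. For a subset E ⊆ {0, …, n−1} with |E| = τ, let e_E(x) = ∑_{s ∈ E} x^s and w_E(x) = e_E(x)·b(x) mod (x^n − 1). Then the sum of the Hamming weights of w_E over all τ-subsets E equals n·W, where W = ∑_{j odd, 0 ≤ j ≤ min(δ,τ)} C(δ, j)·C(n−δ, τ−j) (binomial coefficients). Equivalently, the expected Hamming weight of w_E for a uniformly random weight-τ error is E[ω] = n·W / C(n, τ). -/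
/-!
The `k`-th coefficient of `w_E = e_E · b mod (xⁿ − 1)` is `∑_{s ∈ E} b_{k−s mod n}`, so over `F₂`
it is nonzero exactly when `E` meets `S_k = {s : b_{k−s mod n} ≠ 0}` in an odd number of points.
Each `S_k` is a cyclic reflection of the support of `b`, hence has `δ` elements, and the number of
`τ`-sets meeting a fixed `δ`-set in `j` points is `C(δ, j)·C(n − δ, τ − j)`. Exchanging the sum
over `E` with the sum over the `n` positions `k` gives `n · W`.
-/

open Polynomial Finset

theorem ZMod.sum_ne_zero_iff_odd_card_filter {ι : Type*} (E : Finset ι) (v : ι → ZMod 2) :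
    ∑ s ∈ E, v s ≠ 0 ↔ Odd #{s ∈ E | v s ≠ 0} := by
  classical
  have indicator : ∀ x : ZMod 2, x = if x ≠ 0 then 1 else 0 := by decide
  rw [sum_congr rfl fun s _ => indicator (v s), sum_boole, natCast_ne_zero_iff_odd]

/-- For `k, t < n`, `(n + k - t) % n` is `k - t` modulo `n` without truncated subtraction, and
`t ↦ k - t` is an involution. -/
theorem Nat.add_sub_mod_add_sub_mod {n k t : ℕ} (hk : k < n) (ht : t < n) :
    (n + k - (n + k - t) % n) % n = t := by
  rcases le_or_gt t k with htk | htk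
  · rw [show n + k - t = n + (k - t) by omega, Nat.add_mod_left,
      Nat.mod_eq_of_lt (show k - t < n by omega), show n + k - (k - t) = n + t by omega,
      Nat.add_mod_left, Nat.mod_eq_of_lt ht]
  · rw [Nat.mod_eq_of_lt (by omega : n + k - t < n), show n + k - (n + k - t) = t by omega,
      Nat.mod_eq_of_lt ht]

section Counting

variable {α : Type*} [DecidableEq α] {U S : Finset α}

theorem Finset.card_powersetCard_filter_card_inter_eq (hS : S ⊆ U) {τ j : ℕ} (hj : j ≤ τ) :
    #{E ∈ U.powersetCard τ | #(E ∩ S) = j} = (#S).choose j * (#U - #S).choose (τ - j) := by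
  rw [← card_sdiff_of_subset hS, ← card_powersetCard, ← card_powersetCard, ← card_product]
  have split_pieces : ∀ A ⊆ S, ∀ B ⊆ U \ S, (A ∪ B) ∩ S = A ∧ (A ∪ B) \ S = B := by
    intro A hA B hB
    constructor <;> ext x <;> have := @hA x <;> have := @hB x <;> simp at * <;> tauto
  refine card_nbij' (fun E => (E ∩ S, E \ S)) (fun P => P.1 ∪ P.2) ?_ ?_ ?_ ?_
  · intro E hE
    simp only [mem_coe, mem_filter, mem_powersetCard, mem_product] at hE ⊢
    obtain ⟨⟨hEU, hEτ⟩, hEj⟩ := hE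
    have := card_inter_add_card_sdiff E S
    exact ⟨⟨inter_subset_right, hEj⟩, sdiff_subset_sdiff hEU Subset.rfl, by omega⟩
  · rintro ⟨A, B⟩ hP
    simp only [mem_coe, mem_filter, mem_powersetCard, mem_product] at hP ⊢
    obtain ⟨⟨hA, hAj⟩, hB, hBτ⟩ := hP
    have hdisj : Disjoint A B := disjoint_of_subset_left hA (subset_sdiff.mp hB).2.symm
    refine ⟨⟨union_subset (hA.trans hS) (hB.trans sdiff_subset), ?_⟩, ?_⟩
    · rw [card_union_of_disjoint hdisj, hAj, hBτ]; omega
    · rw [(split_pieces A hA B hB).1, hAj]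
  · intro E _
    exact sup_inf_sdiff E S
  · rintro ⟨A, B⟩ hP
    simp only [mem_coe, mem_powersetCard, mem_product] at hP
    obtain ⟨h1, h2⟩ := split_pieces A hP.1.1 B hP.2.1
    simp only [h1, h2]

theorem Finset.card_powersetCard_filter_odd_card_inter (hS : S ⊆ U) (τ : ℕ) :
    #{E ∈ U.powersetCard τ | Odd #(E ∩ S)}
      = ∑ j ∈ (range (min #S τ + 1)).filter Odd, (#S).choose j * (#U - #S).choose (τ - j) := by
  rw [card_eq_sum_card_fiberwise (f := fun E => #(E ∩ S))
      (t := (range (min #S τ + 1)).filter Odd) ?_]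
  · refine sum_congr rfl fun j hj => ?_
    simp only [mem_filter, mem_range] at hj
    rw [← card_powersetCard_filter_card_inter_eq hS (by omega), filter_filter]
    congr 1
    refine filter_congr fun E _ => ⟨And.right, fun h => ⟨h ▸ hj.2, h⟩⟩
  · intro E hE
    simp only [coe_filter, mem_powersetCard, Set.mem_ofPred_eq] at hE
    simp only [coe_filter, mem_range, Set.mem_ofPred_eq]
    have := card_le_card (inter_subset_left : E ∩ S ⊆ E)
    have := card_le_card (inter_subset_right : E ∩ S ⊆ S)
    exact ⟨by omega, hE.2⟩

end Counting

namespace Polynomial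

variable {R : Type*}

theorem monic_X_pow_sub_one [CommRing R] {n : ℕ} (hn : 0 < n) : (X ^ n - 1 : R[X]).Monic := by
  simpa using monic_X_pow_sub_C (1 : R) hn.ne'

theorem degree_X_pow_sub_one [CommRing R] [Nontrivial R] {n : ℕ} (hn : 0 < n) :
    (X ^ n - 1 : R[X]).degree = n := by
  simpa using degree_X_pow_sub_C hn (1 : R)

theorem support_eq_filter_range_of_degree_lt [Semiring R] [DecidableEq R] {n : ℕ} {p : R[X]}
    (hp : p.degree < n) : p.support = {k ∈ range n | p.coeff k ≠ 0} := by
  ext k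
  simp only [mem_support_iff, mem_filter, mem_range, iff_and_self]
  intro hk
  by_contra! hkn
  exact hk (coeff_eq_zero_of_degree_lt (hp.trans_le (by exact_mod_cast hkn)))

theorem coeff_sum_range_monomial [Semiring R] (n : ℕ) (f : ℕ → R) (m : ℕ) :
    (∑ i ∈ range n, monomial i (f i)).coeff m = if m < n then f m else 0 := by
  simp only [finsetSum_coeff, coeff_monomial, sum_ite_eq', mem_range]

theorem coeff_modByMonic_X_pow_sub_one [CommRing R] [Nontrivial R] {n k : ℕ} {p : R[X]}
    (hp : p.degree < ↑(2 * n)) (hk : k < n) :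
    (p %ₘ (X ^ n - 1)).coeff k = p.coeff k + p.coeff (n + k) := by
  set lo := ∑ i ∈ range n, monomial i (p.coeff i)
  set hi := ∑ i ∈ range n, monomial i (p.coeff (n + i))
  have hn : 0 < n := by omega
  have hmonic : (X ^ n - 1 : R[X]).Monic := monic_X_pow_sub_one hn
  have hp' := (degree_lt_iff_coeff_zero _ _).mp hp
  have split : p = lo + X ^ n * hi := by
    ext m
    rw [coeff_add, coeff_X_pow_mul', coeff_sum_range_monomial, coeff_sum_range_monomial]
    by_cases hm : m < n
    · simp [hm, show ¬ n ≤ m by omega]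
    · by_cases hm' : m < 2 * n
      · simp [hm, show n ≤ m by omega, show m - n < n by omega, show n + (m - n) = m by omega]
      · simp [hm, show n ≤ m by omega, show ¬ m - n < n by omega, hp' m (by omega)]
  have hmod : p %ₘ (X ^ n - 1) = lo + hi := by
    rw [modByMonic_eq_of_dvd_sub hmonic (p₂ := lo + hi) ⟨hi, by rw [split]; ring⟩,
      modByMonic_eq_self_iff hmonic, degree_X_pow_sub_one hn, degree_lt_iff_coeff_zero]
    intro m hm
    simp only [lo, hi, coeff_add, coeff_sum_range_monomial, if_neg (show ¬ m < n by omega),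
      add_zero]
  simp only [hmod, coeff_add, lo, hi, coeff_sum_range_monomial, if_pos hk]

theorem coeff_X_pow_mul_modByMonic_X_pow_sub_one [CommRing R] [Nontrivial R] {n s k : ℕ}
    {b : R[X]} (hb : b.degree < n) (hs : s < n) (hk : k < n) :
    ((X ^ s * b) %ₘ (X ^ n - 1)).coeff k = b.coeff ((n + k - s) % n) := by
  have hb' := (degree_lt_iff_coeff_zero _ _).mp hb
  have hdeg : (X ^ s * b).degree < ↑(2 * n) := by
    rw [degree_lt_iff_coeff_zero]
    intro m hm
    rw [coeff_X_pow_mul']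
    split_ifs <;> simp [hb' (m - s) (by omega)]
  rw [coeff_modByMonic_X_pow_sub_one hdeg hk, coeff_X_pow_mul', coeff_X_pow_mul',
    if_pos (show s ≤ n + k by omega)]
  by_cases hsk : s ≤ k
  · rw [if_pos hsk, hb' (n + k - s) (by omega), show n + k - s = n + (k - s) by omega,
      Nat.add_mod_left, Nat.mod_eq_of_lt (by omega), add_zero]
  · rw [if_neg hsk, Nat.mod_eq_of_lt (by omega), zero_add]

theorem coeff_sum_X_pow_mul_modByMonic_X_pow_sub_one [CommRing R] [Nontrivial R] {n k : ℕ}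
    {b : R[X]} (hb : b.degree < n) {E : Finset ℕ} (hE : E ⊆ range n) (hk : k < n) :
    (((∑ s ∈ E, X ^ s) * b) %ₘ (X ^ n - 1)).coeff k = ∑ s ∈ E, b.coeff ((n + k - s) % n) := by
  rw [sum_mul, ← modByMonicHom_apply, map_sum, finsetSum_coeff]
  exact sum_congr rfl fun s hs =>
    coeff_X_pow_mul_modByMonic_X_pow_sub_one hb (mem_range.mp (hE hs)) hk

theorem card_filter_coeff_reflect_ne_zero [Semiring R] [DecidableEq R] {n k : ℕ}
    {b : R[X]} (hb : b.degree < n) (hk : k < n) :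
    #{s ∈ range n | b.coeff ((n + k - s) % n) ≠ 0} = #b.support := by
  rw [support_eq_filter_range_of_degree_lt hb]
  refine card_nbij' (fun s => (n + k - s) % n) (fun t => (n + k - t) % n) ?_ ?_ ?_ ?_
  all_goals
    intro s hs
    simp only [mem_coe, mem_filter, mem_range] at hs ⊢
  · exact ⟨Nat.mod_lt _ (by omega), hs.2⟩
  · exact ⟨Nat.mod_lt _ (by omega), by rw [Nat.add_sub_mod_add_sub_mod hk hs.1]; exact hs.2⟩
  · exact Nat.add_sub_mod_add_sub_mod hk hs.1
  · exact Nat.add_sub_mod_add_sub_mod hk hs.1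

end Polynomial

theorem card_support_sum_X_pow_mul_modByMonic_X_pow_sub_one {n : ℕ} (hn : 0 < n)
    {b : (ZMod 2)[X]} (hb : b.degree < n) {E : Finset ℕ} (hE : E ⊆ range n) :
    #(((∑ s ∈ E, X ^ s) * b) %ₘ (X ^ n - 1)).support
      = #{k ∈ range n | Odd #(E ∩ {s ∈ range n | b.coeff ((n + k - s) % n) ≠ 0})} := by
  have hw : (((∑ s ∈ E, X ^ s) * b) %ₘ (X ^ n - 1)).degree < n :=
    degree_X_pow_sub_one (R := ZMod 2) hn ▸ degree_modByMonic_lt _ (monic_X_pow_sub_one hn)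
  rw [support_eq_filter_range_of_degree_lt hw]
  refine congrArg card (filter_congr fun k hk => ?_)
  rw [coeff_sum_X_pow_mul_modByMonic_X_pow_sub_one hb hE (mem_range.mp hk),
    ZMod.sum_ne_zero_iff_odd_card_filter, inter_filter, inter_eq_left.mpr hE]

theorem expected_weight_of_error_times_dual_general (n δ τ : ℕ) (hn : 1 ≤ n)
    (b : Polynomial (ZMod 2)) (hbdeg : b.degree < (n : ℕ))
    (hbwt : b.support.card = δ) :
    ∑ E ∈ (Finset.range n).powersetCard τ,
        (((∑ s ∈ E, (X : Polynomial (ZMod 2)) ^ s) * b) %ₘ (X ^ n - 1)).support.card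
      = n * ∑ j ∈ (Finset.range (min δ τ + 1)).filter (fun j => Odd j),
          δ.choose j * (n - δ).choose (τ - j) := by
  set S : ℕ → Finset ℕ := fun k => {s ∈ range n | b.coeff ((n + k - s) % n) ≠ 0}
  calc _ = ∑ E ∈ (range n).powersetCard τ, #{k ∈ range n | Odd #(E ∩ S k)} :=
        sum_congr rfl fun E hE =>
          card_support_sum_X_pow_mul_modByMonic_X_pow_sub_one hn hbdeg (mem_powersetCard.mp hE).1
    _ = ∑ k ∈ range n, #{E ∈ (range n).powersetCard τ | Odd #(E ∩ S k)} := by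
        simp only [card_filter]
        exact sum_comm
    _ = ∑ _k ∈ range n, ∑ j ∈ (range (min δ τ + 1)).filter Odd,
          δ.choose j * (n - δ).choose (τ - j) :=
        sum_congr rfl fun k hk => by
          rw [card_powersetCard_filter_odd_card_inter (filter_subset _ _),
            card_filter_coeff_reflect_ne_zero hbdeg (mem_range.mp hk), hbwt, card_range]
    _ = _ := by rw [sum_const, card_range, smul_eq_mul]

/-- Fix `b ∈ F_2[x]` of degree `< n` with exactly `δ` nonzero coefficients and
`0 ≤ τ ≤ n`.  For a `τ`-subset `E ⊆ {0,…,n−1}` let `e_E = ∑_{s∈E} x^s` and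
`w_E = e_E·b mod (x^n − 1)`.  Then the sum of the Hamming weights of the `w_E`
over all `τ`-subsets `E` equals `n·W` where
`W = ∑_{j odd, 0 ≤ j ≤ min(δ,τ)} C(δ,j)·C(n−δ,τ−j)`; equivalently, the expected
weight of `w_E` for a uniformly random weight-`τ` error is `n·W / C(n,τ)`. -/
theorem expected_weight_of_error_times_dual (n δ τ : ℕ) (hn : 1 ≤ n)
    (b : Polynomial (ZMod 2)) (hbdeg : b.degree < (n : ℕ))
    (hbwt : b.support.card = δ) (hτ : τ ≤ n) :
    ∑ E ∈ (Finset.range n).powersetCard τ,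
        (((∑ s ∈ E, (X : Polynomial (ZMod 2)) ^ s) * b) %ₘ (X ^ n - 1)).support.card
      = n * ∑ j ∈ (Finset.range (min δ τ + 1)).filter (fun j => Odd j),
          δ.choose j * (n - δ).choose (τ - j) :=
  expected_weight_of_error_times_dual_general n δ τ hn b hbdeg hbwt
end

section
/- Let n = 2^m − 1 and let α be a primitive element of F_{2^m}. For x ∈ F_{2^m}, let coords(x) ∈ F_2^m denote the coordinates of x with respect to the basis (1, α, …, α^{m−1}). Define R(r,m)* = { ( f(coords(α^0)), f(coords(α^1)), …, f(coords(α^{n−1})) ) : f a multilinear polynomial over F_2 in m variables of degree ≤ r } ⊆ F_2^n. Then R(r,m)* is a cyclic code: it is invariant under the cyclic shift (c_0, c_1, …, c_{n−1}) ↦ (c_{n−1}, c_0, …, c_{n−2}). -/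
/-!
Multiplication by `α⁻¹` is `𝔽₂`-linear on `𝔽_{2^m}`, and `coords` is a linear isomorphism
(a right inverse of the surjection `v ↦ ∑ vᵢ αⁱ` between spaces of dimension `m`), so
`coords (α^(i-1)) = M *ᵥ coords (α^i)` for a fixed matrix `M`. Substituting the linear forms
of `M` into `f` does not raise the degree, and neither does reducing the result modulo
`Xⱼ² = Xⱼ`, which leaves its values on `𝔽₂^m` unchanged.
-/

/-- A multilinear (Boolean) polynomial: every variable occurs with exponent at
most one in every monomial. -/
def IsMultilinear {m : ℕ} (f : MvPolynomial (Fin m) (ZMod 2)) : Prop :=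
  ∀ s ∈ f.support, ∀ i, s i ≤ 1

open MvPolynomial Matrix

theorem ZMod.two_pow_succ (a : ZMod 2) (e : ℕ) : a ^ (e + 1) = a := by
  induction e with
  | zero => exact pow_one a
  | succ e ih => rw [pow_succ, ih, ← sq, ZMod.pow_card]

namespace MvPolynomial

section LinearChange

variable {σ τ R : Type*} [CommSemiring R]

theorem totalDegree_bind₁_le {g : τ → MvPolynomial σ R} {d : ℕ}
    (hg : ∀ j, (g j).totalDegree ≤ d) (f : MvPolynomial τ R) :
    (bind₁ g f).totalDegree ≤ d * f.totalDegree := by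
  conv_lhs => rw [f.as_sum]
  rw [map_sum]
  refine totalDegree_finsetSum_le fun s hs => ?_
  rw [bind₁_monomial]
  calc _ ≤ (C (f.coeff s)).totalDegree + (∏ j ∈ s.support, g j ^ s j).totalDegree :=
        totalDegree_mul _ _
    _ ≤ ∑ j ∈ s.support, d * s j := by
        rw [totalDegree_C, zero_add]
        refine (totalDegree_finsetProd _ _).trans (Finset.sum_le_sum fun j _ => ?_)
        exact (totalDegree_pow _ _).trans (by rw [mul_comm]; gcongr; exact hg j)
    _ ≤ d * f.totalDegree := by
        rw [← Finset.mul_sum]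
        exact Nat.mul_le_mul_left d (le_totalDegree hs)

variable [Fintype σ]

noncomputable def linearChange (M : Matrix τ σ R) : MvPolynomial τ R →ₐ[R] MvPolynomial σ R :=
  bind₁ fun j => ∑ k, C (M j k) * X k

theorem eval_linearChange (M : Matrix τ σ R) (f : MvPolynomial τ R) (v : σ → R) :
    eval v (linearChange M f) = eval (M *ᵥ v) f := by
  have h : (aeval v).comp (linearChange M) = aeval (M *ᵥ v) :=
    algHom_ext fun j => by simp [linearChange, mulVec, dotProduct]
  simpa using DFunLike.congr_fun h f

theorem totalDegree_linearChange_le (M : Matrix τ σ R) (f : MvPolynomial τ R) :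
    (linearChange M f).totalDegree ≤ f.totalDegree := by
  refine (totalDegree_bind₁_le (d := 1) (fun j => ?_) f).trans_eq (one_mul _)
  refine totalDegree_finsetSum_le fun k _ => ?_
  rw [C_mul_X_eq_monomial]
  exact (totalDegree_monomial_le _ _).trans (by simp)

end LinearChange

section MultilinearReduction

variable {σ R : Type*} [CommSemiring R]

/-- The reduction modulo the relations `Xⱼ² = Xⱼ`. -/
noncomputable def multilinearReduction (p : MvPolynomial σ R) : MvPolynomial σ R :=
  ∑ s ∈ p.support, monomial (s.mapRange (min · 1) (by simp)) (p.coeff s)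

theorem exists_eq_mapRange_of_mem_support_multilinearReduction {p : MvPolynomial σ R}
    {t : σ →₀ ℕ} (ht : t ∈ (multilinearReduction p).support) :
    ∃ s ∈ p.support, t = s.mapRange (min · 1) (by simp) := by
  classical
  rw [mem_support_iff, multilinearReduction, coeff_sum] at ht
  obtain ⟨s, hs, hne⟩ := Finset.exists_ne_zero_of_sum_ne_zero ht
  refine ⟨s, hs, ?_⟩
  by_contra hts
  exact hne (by rw [coeff_monomial, if_neg (Ne.symm hts)])

theorem totalDegree_multilinearReduction_le (p : MvPolynomial σ R) :
    (multilinearReduction p).totalDegree ≤ p.totalDegree := by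
  refine Finset.sup_le fun t ht => ?_
  obtain ⟨s, hs, rfl⟩ := exists_eq_mapRange_of_mem_support_multilinearReduction ht
  calc (s.mapRange (min · 1) _).sum (fun _ e => e) = s.sum fun _ e => min e 1 :=
        Finsupp.sum_mapRange_index fun _ => rfl
    _ ≤ s.sum fun _ e => e := Finset.sum_le_sum fun _ _ => min_le_left _ _
    _ ≤ p.totalDegree := le_totalDegree hs

end MultilinearReduction

theorem isMultilinear_multilinearReduction {m : ℕ} (p : MvPolynomial (Fin m) (ZMod 2)) :
    IsMultilinear (multilinearReduction p) := by
  intro t ht i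
  obtain ⟨s, _, rfl⟩ := exists_eq_mapRange_of_mem_support_multilinearReduction ht
  simp

theorem eval_multilinearReduction {σ : Type*} (p : MvPolynomial σ (ZMod 2)) (v : σ → ZMod 2) :
    eval v (multilinearReduction p) = eval v p := by
  conv_rhs => rw [p.as_sum]
  simp only [multilinearReduction, map_sum, eval_monomial]
  refine Finset.sum_congr rfl fun s _ => ?_
  rw [Finsupp.prod_mapRange_index fun _ => pow_zero _]
  congr 1
  refine Finset.prod_congr rfl fun j _ => ?_
  rcases s j with _ | e
  · rfl
  · change v j ^ min (e + 1) 1 = v j ^ (e + 1)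
    rw [Nat.min_eq_right (Nat.succ_pos e), pow_one, ZMod.two_pow_succ]

end MvPolynomial

theorem LinearMap.exists_coe_eq_of_rightInverse {K V W : Type*} [Field K] [AddCommGroup V]
    [Module K V] [AddCommGroup W] [Module K W] [FiniteDimensional K V] [FiniteDimensional K W]
    (φ : V →ₗ[K] W) (h : Module.finrank K V = Module.finrank K W) {s : W → V}
    (hs : Function.RightInverse s φ) : ∃ L : W →ₗ[K] V, ⇑L = s := by
  have hsurj : Function.Surjective φ := hs.surjective
  have hinj : Function.Injective φ := (injective_iff_surjective_of_finrank_eq_finrank h).mpr hsurj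
  refine ⟨(LinearEquiv.ofBijective φ ⟨hinj, hsurj⟩).symm.toLinearMap, funext fun x => hinj ?_⟩
  rw [hs x]
  exact (LinearEquiv.ofBijective φ ⟨hinj, hsurj⟩).apply_symm_apply x

theorem pow_val_sub_one_mul {M : Type*} [Monoid M] {x : M} {n : ℕ} [NeZero n]
    (hx : orderOf x = n) (i : Fin n) : x ^ ((i - 1 : Fin n) : ℕ) * x = x ^ (i : ℕ) := by
  subst hx
  conv_rhs => rw [← sub_add_cancel i 1]
  rw [Fin.val_add, pow_mod_orderOf, pow_add, Fin.val_one', pow_mod_orderOf, pow_one]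

theorem punctured_RM_is_cyclic_general (m r n : ℕ) (hm : 1 ≤ m) [NeZero n]
    (α : GaloisField 2 m) (hα : orderOf α = n)
    (coords : GaloisField 2 m → Fin m → ZMod 2)
    (hcoords : ∀ x : GaloisField 2 m,
      ∑ i : Fin m, algebraMap (ZMod 2) (GaloisField 2 m) (coords x i) * α ^ (i : ℕ) = x)
    (c : Fin n → ZMod 2)
    (hc : ∃ f : MvPolynomial (Fin m) (ZMod 2), IsMultilinear f ∧
      f.totalDegree ≤ r ∧
      ∀ i : Fin n, c i = MvPolynomial.eval (coords (α ^ (i : ℕ))) f) :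
    ∃ ftil : MvPolynomial (Fin m) (ZMod 2), IsMultilinear ftil ∧
      ftil.totalDegree ≤ r ∧
      ∀ i : Fin n, c (i - 1) = MvPolynomial.eval (coords (α ^ (i : ℕ))) ftil := by
  obtain ⟨f, -, hfdeg, hfeval⟩ := hc
  have hα0 : α ≠ 0 := by
    rintro rfl
    exact NeZero.ne n (hα ▸ orderOf_zero _)
  set φ := Fintype.linearCombination (ZMod 2) fun i : Fin m => α ^ (i : ℕ)
  have hφ : Function.RightInverse coords φ := fun x => by
    simpa [φ, Fintype.linearCombination_apply, Algebra.smul_def] using hcoords x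
  obtain ⟨L, rfl⟩ := φ.exists_coe_eq_of_rightInverse
    (by rw [Module.finrank_fin_fun, GaloisField.finrank 2 (by omega)]) hφ
  set M := LinearMap.toMatrix' (L ∘ₗ LinearMap.mulRight (ZMod 2) α⁻¹ ∘ₗ φ)
  have hshift : ∀ x, L (x * α⁻¹) = M *ᵥ L x := fun x => by
    rw [LinearMap.toMatrix'_mulVec, LinearMap.comp_apply, LinearMap.comp_apply, hφ x,
      LinearMap.mulRight_apply]
  refine ⟨multilinearReduction (linearChange M f), isMultilinear_multilinearReduction _,
    (totalDegree_multilinearReduction_le _).trans ((totalDegree_linearChange_le M f).trans hfdeg),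
    fun i => ?_⟩
  rw [hfeval, eval_multilinearReduction, eval_linearChange, ← hshift,
    (eq_mul_inv_iff_mul_eq₀ hα0).mpr (pow_val_sub_one_mul hα i)]

/-- The reordered punctured Reed-Muller code
`R(r,m)* = { (f(coords α^0), …, f(coords α^{n−1})) : f multilinear of degree ≤ r }`
is cyclic: it is invariant under the cyclic shift
`(c_0, …, c_{n−1}) ↦ (c_{n−1}, c_0, …, c_{n−2})` (position `i` of the shifted
word is `c_{i−1 mod n}`). -/
theorem punctured_RM_is_cyclic (m r n : ℕ) (hm : 1 ≤ m) (hr : r ≤ m)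
    (hn : n = 2 ^ m - 1) [NeZero n]
    (α : GaloisField 2 m) (hα : orderOf α = n)
    (coords : GaloisField 2 m → Fin m → ZMod 2)
    (hcoords : ∀ x : GaloisField 2 m,
      ∑ i : Fin m, algebraMap (ZMod 2) (GaloisField 2 m) (coords x i) * α ^ (i : ℕ) = x)
    (c : Fin n → ZMod 2)
    (hc : ∃ f : MvPolynomial (Fin m) (ZMod 2), IsMultilinear f ∧
      f.totalDegree ≤ r ∧
      ∀ i : Fin n, c i = MvPolynomial.eval (coords (α ^ (i : ℕ))) f) :
    ∃ ftil : MvPolynomial (Fin m) (ZMod 2), IsMultilinear ftil ∧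
      ftil.totalDegree ≤ r ∧
      ∀ i : Fin n, c (i - 1) = MvPolynomial.eval (coords (α ^ (i : ℕ))) ftil :=
  punctured_RM_is_cyclic_general m r n hm α hα coords hcoords c hc
end

section
/- Let n = 2^m − 1, let α be a primitive element of F_{2^m}, and let 0 ≤ r ≤ m−1. For x ∈ F_{2^m}, let coords(x) ∈ F_2^m denote the coordinates of x with respect to the basis (1, α, …, α^{m−1}). Then for every multilinear polynomial f over F_2 in m variables of degree ≤ r, and every integer h with 1 ≤ wt₂(h) ≤ m − r − 1 (where wt₂(h) is the number of ones in the binary expansion of h), one has ∑_{i=0}^{n−1} ι( f(coords(α^i)) ) · α^{h·i} = 0 in F_{2^m}, where ι : F_2 → F_{2^m} is the canonical embedding. Equivalently, α^h is a root of every code polynomial of the code R(r,m)*. -/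
def wt2 (h : ℕ) : ℕ := (Nat.digits 2 h).sum

open Nat in
theorem wt2_add_le (a b : ℕ) : wt2 (a + b) ≤ wt2 a + wt2 b := by
  -- Legendre: `v₂ (n !) = n - wt2 n`, and `a ! * b !` divides `(a + b) !`.
  have legendre (n : ℕ) : padicValNat 2 n ! = n - wt2 n := by
    simpa [wt2] using sub_one_mul_padicValNat_factorial (p := 2) n
  have hval := congrArg (padicValNat 2) (add_choose_mul_factorial_mul_factorial a b)
  have hchoose : (a + b).choose b ≠ 0 := (choose_pos (le_add_left b a)).ne'
  rw [padicValNat.mul (mul_ne_zero hchoose (factorial_ne_zero a)) (factorial_ne_zero b),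
    padicValNat.mul hchoose (factorial_ne_zero a)] at hval
  have := digit_sum_le 2 a
  have := digit_sum_le 2 b
  have := digit_sum_le 2 (a + b)
  simp only [legendre] at hval
  unfold wt2 at *
  omega

theorem wt2_two_pow (k : ℕ) : wt2 (2 ^ k) = 1 := by
  simpa [wt2] using
    congrArg List.sum (Nat.digits_base_pow_mul (b := 2) (k := k) (m := 1) (by norm_num) one_pos)

theorem wt2_add_two_pow_mul {m s : ℕ} (hs : s < 2 ^ m) (q : ℕ) :
    wt2 (s + 2 ^ m * q) = wt2 s + wt2 q := by
  rcases q.eq_zero_or_pos with rfl | hq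
  · simp [wt2]
  have hlen : (Nat.digits 2 s).length ≤ m := (Nat.digits_length_le_iff (by norm_num) s).mpr hs
  have := Nat.digits_append_zeroes_append_digits (b := 2) (n := s)
    (k := m - (Nat.digits 2 s).length) (by norm_num) hq
  rw [Nat.add_sub_cancel' hlen] at this
  simp [wt2, ← this]

theorem wt2_two_pow_sub_one (m : ℕ) : wt2 (2 ^ m - 1) = m := by
  induction m with
  | zero => simp [wt2]
  | succ m ih =>
    have h : 2 ^ (m + 1) - 1 = 1 + 2 ^ 1 * (2 ^ m - 1) := by
      have := Nat.one_le_two_pow (n := m); rw [pow_succ]; omega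
    rw [h, wt2_add_two_pow_mul (by norm_num), ih, add_comm]
    simp [wt2]

/-- Folding the high binary digits onto the low ones, `s + 2 ^ m * q ↦ s + q`, keeps the residue
modulo `2 ^ m - 1` and does not increase the weight. -/
theorem le_wt2_of_two_pow_sub_one_dvd {m N : ℕ} (hN : N ≠ 0) (hdvd : 2 ^ m - 1 ∣ N) :
    m ≤ wt2 N := by
  induction N using Nat.strong_induction_on with
  | _ N ih =>
  have hpos : 0 < 2 ^ m := by positivity
  obtain ⟨s, q, hs, rfl⟩ : ∃ s q, s < 2 ^ m ∧ N = s + 2 ^ m * q :=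
    ⟨N % 2 ^ m, N / 2 ^ m, Nat.mod_lt _ hpos, (Nat.mod_add_div N _).symm⟩
  rcases q.eq_zero_or_pos with rfl | hq
  · have : s = 2 ^ m - 1 := by have := Nat.le_of_dvd (Nat.pos_of_ne_zero hN) hdvd; omega
    simp [this, wt2_two_pow_sub_one]
  have hm : m ≠ 0 := by rintro rfl; simp_all
  have hfold : s + 2 ^ m * q = (s + q) + (2 ^ m - 1) * q := by
    have := Nat.le_mul_of_pos_left q hpos
    rw [Nat.sub_mul, one_mul]; omega
  have hlt : s + q < s + 2 ^ m * q := by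
    have := Nat.one_lt_two_pow hm
    nlinarith
  calc m ≤ wt2 (s + q) :=
        ih _ hlt (by omega) ((Nat.dvd_add_left (dvd_mul_right _ _)).mp (hfold ▸ hdvd))
    _ ≤ wt2 s + wt2 q := wt2_add_le s q
    _ = wt2 (s + 2 ^ m * q) := (wt2_add_two_pow_mul hs q).symm

theorem exists_linearMap_eq_of_sum_smul_eq {F V ι : Type*} [Field F] [AddCommGroup V]
    [Module F V] [FiniteDimensional F V] [Fintype ι] {v : ι → V}
    (hcard : Fintype.card ι = Module.finrank F V) {c : V → ι → F}
    (hc : ∀ x, ∑ i, c x i • v i = x) : ∃ L : V →ₗ[F] ι → F, ⇑L = c := by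
  set T := Fintype.linearCombination F v
  have hsurj : Function.Surjective T := fun x => ⟨c x, hc x⟩
  have hinj : Function.Injective T :=
    (LinearMap.injective_iff_surjective_of_finrank_eq_finrank (by simpa using hcard)).mpr hsurj
  let e := LinearEquiv.ofBijective T ⟨hinj, hsurj⟩
  exact ⟨e.symm, funext fun x => e.injective <| by
    rw [LinearEquiv.coe_coe, e.apply_symm_apply]; exact (hc x).symm⟩

theorem exists_eq_trace_mul {F K : Type*} [Field F] [Field K] [Algebra F K]
    [FiniteDimensional F K] [Algebra.IsSeparable F K] (φ : Module.Dual F K) :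
    ∃ β : K, ∀ x, φ x = Algebra.trace F K (β * x) :=
  ⟨((Algebra.traceForm F K).toDual (traceForm_nondegenerate F K)).symm φ, fun x => by
    rw [← Algebra.traceForm_apply, LinearMap.BilinForm.apply_toDual_symm_apply]⟩

theorem geom_sum_pow_orderOf_eq_zero {K : Type*} [DivisionRing K] {α : K} {k : ℕ}
    (hk : ¬orderOf α ∣ k) :
    ∑ i ∈ Finset.range (orderOf α), (α ^ k) ^ i = 0 := by
  have hne : α ^ k ≠ 1 := fun h => hk (orderOf_dvd_of_pow_eq_one h)
  rw [geom_sum_eq hne, ← pow_mul, mul_comm, pow_mul, pow_orderOf_eq_one, one_pow, sub_self,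
    zero_div]

section wt2PowSpan

open Submodule

def wt2PowSpan (K : Type*) [CommSemiring K] (r : ℕ) : Submodule K (K → K) :=
  span K ((fun e x => x ^ e) '' {e | wt2 e ≤ r})

variable {K : Type*}

theorem pow_mem_wt2PowSpan [CommSemiring K] {e r : ℕ} (he : wt2 e ≤ r) :
    (fun x : K => x ^ e) ∈ wt2PowSpan K r :=
  subset_span ⟨e, he, rfl⟩

theorem wt2PowSpan_mono [CommSemiring K] : Monotone (wt2PowSpan K) :=
  fun _ _ hab => span_mono (Set.image_mono fun _ he => le_trans he hab)

theorem wt2PowSpan_mul_le [CommSemiring K] (a b : ℕ) :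
    wt2PowSpan K a * wt2PowSpan K b ≤ wt2PowSpan K (a + b) := by
  rw [wt2PowSpan, wt2PowSpan, span_mul_span]
  refine span_mono ?_
  rintro _ ⟨_, ⟨e, he, rfl⟩, _, ⟨e', he', rfl⟩, rfl⟩
  exact ⟨e + e', (wt2_add_le e e').trans (add_le_add he he'), funext fun x => pow_add x e e'⟩

instance [CommSemiring K] : SetLike.GradedMonoid (wt2PowSpan K) where
  one_mem := by
    rw [show (1 : K → K) = fun x => x ^ 0 by funext; simp]
    exact pow_mem_wt2PowSpan (by simp [wt2])
  mul_mem a b _ _ hf hg := wt2PowSpan_mul_le a b (mul_mem_mul hf hg)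

theorem algebraMap_eval_mem_wt2PowSpan {F σ : Type*} [CommSemiring F] [CommSemiring K]
    [Algebra F K] [Fintype σ] {c : K → σ → F}
    (hc : ∀ j, (fun x => algebraMap F K (c x j)) ∈ wt2PowSpan K 1)
    {f : MvPolynomial σ F} {r : ℕ} (hf : f.totalDegree ≤ r) :
    (fun x => algebraMap F K (MvPolynomial.eval (c x) f)) ∈ wt2PowSpan K r := by
  have hsum : (fun x => algebraMap F K (MvPolynomial.eval (c x) f)) =
      ∑ d ∈ f.support, f.coeff d • ∏ j, (fun x => algebraMap F K (c x j)) ^ d j := by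
    funext x
    simp [MvPolynomial.eval_eq', Finset.prod_apply, Algebra.smul_def]
  rw [hsum]
  refine sum_mem fun d hd => smul_of_tower_mem _ _ ?_
  refine wt2PowSpan_mono ?_ (SetLike.prod_pow_mem_graded _ (fun _ => 1) _ d fun j _ => hc j)
  simpa [Finsupp.sum_fintype] using (MvPolynomial.le_totalDegree hd).trans hf

theorem algebraMap_dual_mem_wt2PowSpan_one [Field K] [Finite K] [Algebra (ZMod 2) K]
    (φ : Module.Dual (ZMod 2) K) : (fun x => algebraMap (ZMod 2) K (φ x)) ∈ wt2PowSpan K 1 := by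
  obtain ⟨β, hβ⟩ := exists_eq_trace_mul φ
  have hsum : (fun x => algebraMap (ZMod 2) K (φ x)) =
      ∑ i ∈ Finset.range (Module.finrank (ZMod 2) K), β ^ 2 ^ i • fun x : K => x ^ 2 ^ i := by
    funext x
    simp [hβ, FiniteField.algebraMap_trace_eq_sum_pow, mul_pow]
  rw [hsum]
  exact sum_mem fun i _ => smul_mem _ _ (pow_mem_wt2PowSpan (wt2_two_pow i).le)

theorem sum_mul_pow_eq_zero_of_mem_wt2PowSpan [Field K] {α : K} {m r h : ℕ}
    (hα : orderOf α = 2 ^ m - 1) (hh : h ≠ 0) (hrh : r + wt2 h < m) {g : K → K}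
    (hg : g ∈ wt2PowSpan K r) : ∑ i ∈ Finset.range (2 ^ m - 1), g (α ^ i) * α ^ (h * i) = 0 := by
  induction hg using span_induction with
  | mem _ hu =>
    obtain ⟨e, he : wt2 e ≤ r, rfl⟩ := hu
    have hdvd : ¬orderOf α ∣ e + h := fun hdvd => by
      have := le_wt2_of_two_pow_sub_one_dvd (by omega) (hα ▸ hdvd)
      have := wt2_add_le e h
      omega
    rw [← hα, ← geom_sum_pow_orderOf_eq_zero hdvd]
    refine Finset.sum_congr rfl fun i _ => ?_
    dsimp only
    ring
  | zero => simp
  | add _ _ _ _ hu hv => simp [add_mul, Finset.sum_add_distrib, hu, hv]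
  | smul a _ _ hu => simp [mul_assoc, ← Finset.mul_sum, hu]

end wt2PowSpan

theorem punctured_RM_code_roots_general (m r n : ℕ)
    (hn : n = 2 ^ m - 1)
    (α : GaloisField 2 m) (hα : orderOf α = n)
    (coords : GaloisField 2 m → Fin m → ZMod 2)
    (hcoords : ∀ x : GaloisField 2 m,
      ∑ i : Fin m, algebraMap (ZMod 2) (GaloisField 2 m) (coords x i) * α ^ (i : ℕ) = x)
    (f : MvPolynomial (Fin m) (ZMod 2))
    (hfr : f.totalDegree ≤ r)
    (h : ℕ) (h1 : 1 ≤ wt2 h) (h2 : wt2 h ≤ m - r - 1) :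
    ∑ i ∈ Finset.range n,
        algebraMap (ZMod 2) (GaloisField 2 m)
          (MvPolynomial.eval (coords (α ^ i)) f) * α ^ (h * i) = 0 := by
  have hh : h ≠ 0 := by rintro rfl; simp [wt2] at h1
  obtain ⟨L, hL⟩ := exists_linearMap_eq_of_sum_smul_eq (F := ZMod 2)
    (v := fun i : Fin m => α ^ (i : ℕ)) (by simp [GaloisField.finrank 2 (by omega : m ≠ 0)])
    (fun x => by simpa [Algebra.smul_def] using hcoords x)
  have hcode : (fun x => algebraMap (ZMod 2) _ (MvPolynomial.eval (coords x) f)) ∈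
      wt2PowSpan (GaloisField 2 m) r :=
    algebraMap_eval_mem_wt2PowSpan (fun j => by
      simpa [hL] using algebraMap_dual_mem_wt2PowSpan_one (LinearMap.proj j ∘ₗ L)) hfr
  subst hn
  exact sum_mul_pow_eq_zero_of_mem_wt2PowSpan hα hh (by omega) hcode

/-- Let `n = 2^m − 1`, `α` primitive in `F_{2^m}`, `0 ≤ r ≤ m−1`.  For every
multilinear `f` of degree `≤ r` and every integer `h` with
`1 ≤ wt₂(h) ≤ m − r − 1`, `α^h` is a root of the code polynomial of `R(r,m)*`
coming from `f`:  `∑_{i<n} ι(f(coords α^i)) · α^{h·i} = 0`. -/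
theorem punctured_RM_code_roots (m r n : ℕ) (hm : 1 ≤ m) (hr : r < m)
    (hn : n = 2 ^ m - 1)
    (α : GaloisField 2 m) (hα : orderOf α = n)
    (coords : GaloisField 2 m → Fin m → ZMod 2)
    (hcoords : ∀ x : GaloisField 2 m,
      ∑ i : Fin m, algebraMap (ZMod 2) (GaloisField 2 m) (coords x i) * α ^ (i : ℕ) = x)
    (f : MvPolynomial (Fin m) (ZMod 2)) (hf : IsMultilinear f)
    (hfr : f.totalDegree ≤ r)
    (h : ℕ) (h1 : 1 ≤ wt2 h) (h2 : wt2 h ≤ m - r - 1) :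
    ∑ i ∈ Finset.range n,
        algebraMap (ZMod 2) (GaloisField 2 m)
          (MvPolynomial.eval (coords (α ^ i)) f) * α ^ (h * i) = 0 :=
  punctured_RM_code_roots_general m r n hn α hα coords hcoords f hfr h h1 h2
end

section
/- Let n = 2^m − 1, let α be a primitive element of F_{2^m}, and let 0 ≤ r ≤ m−1. For x ∈ F_{2^m}, let coords(x) ∈ F_2^m be the coordinates of x with respect to the basis (1, α, …, α^{m−1}). Then the code R(r,m)* = { ( f(coords(α^0)), …, f(coords(α^{n−1})) ) : f multilinear over F_2 of degree ≤ r } equals the binary BCH code { (c_0, …, c_{n−1}) ∈ F_2^n : ∑_{i=0}^{n−1} ι(c_i)·α^{h·i} = 0 for every integer h with 1 ≤ wt₂(h) ≤ m − r − 1 }, i.e., the cyclic code whose generator polynomial is ∏_{h : 1 ≤ wt₂(h) ≤ m−r−1} (x − α^h); its defining set is the union of the cyclotomic cosets K_i with 0 < wt₂(i) < m − r. Hence the punctured Reed-Muller code of order r is, after this reordering of coordinates, a BCH code. -/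
open Finset

section BinaryWeight

@[simp] lemma wt2_zero : wt2 0 = 0 := by simp [wt2]

lemma wt2_eq_mod_add_wt2_div (h : ℕ) : wt2 h = h % 2 + wt2 (h / 2) := by
  rcases Nat.eq_zero_or_pos h with rfl | hpos
  · simp
  · rw [wt2, Nat.digits_def' (by norm_num) hpos, List.sum_cons, wt2]

lemma wt2_eq_zero_iff {h : ℕ} : wt2 h = 0 ↔ h = 0 := by
  refine ⟨fun hw => ?_, fun h0 => h0 ▸ wt2_zero⟩
  induction h using Nat.strong_induction_on with
  | _ h ih =>
    rw [wt2_eq_mod_add_wt2_div] at hw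
    rcases Nat.eq_zero_or_pos h with h0 | hpos
    · exact h0
    · have := ih (h / 2) (by omega) (by omega)
      omega

lemma wt2_le_of_lt_two_pow {m k : ℕ} (hk : k < 2 ^ m) : wt2 k ≤ m := by
  induction m generalizing k with
  | zero => simp_all
  | succ m ih =>
    rw [wt2_eq_mod_add_wt2_div]
    have := ih (k := k / 2) (by rw [pow_succ] at hk; omega)
    omega

lemma wt2_two_pow_sub_one_sub {m k : ℕ} (hk : k < 2 ^ m) :
    wt2 (2 ^ m - 1 - k) = m - wt2 k := by
  induction m generalizing k with
  | zero => simp_all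
  | succ m ih =>
    rw [pow_succ] at hk ⊢
    have hk2 : k / 2 < 2 ^ m := by omega
    rw [wt2_eq_mod_add_wt2_div, wt2_eq_mod_add_wt2_div k,
      show (2 ^ m * 2 - 1 - k) / 2 = 2 ^ m - 1 - k / 2 by omega, ih hk2]
    have := wt2_le_of_lt_two_pow hk2
    omega

lemma wt2_add_two_pow_mul_s15 {j x : ℕ} (hx : x < 2 ^ j) (y : ℕ) :
    wt2 (x + 2 ^ j * y) = wt2 x + wt2 y := by
  induction j generalizing x with
  | zero => simp_all
  | succ j ih =>
    rw [wt2_eq_mod_add_wt2_div, wt2_eq_mod_add_wt2_div x, pow_succ, mul_comm _ 2, mul_assoc,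
      add_assoc, ← ih (x := x / 2) (by rw [pow_succ] at hx; omega)]
    rw [show (x + 2 * (2 ^ j * y)) % 2 = x % 2 by omega,
      show (x + 2 * (2 ^ j * y)) / 2 = x / 2 + 2 ^ j * y by omega]

/-- Doubling modulo `2 ^ m - 1` rotates the `m` binary digits cyclically. -/
lemma wt2_two_mul_mod {m i : ℕ} (hi : i < 2 ^ m - 1) : wt2 (2 * i % (2 ^ m - 1)) = wt2 i := by
  cases m with
  | zero => simp at hi
  | succ m =>
    have hlow : i % 2 ^ m < 2 ^ m := Nat.mod_lt i (Nat.two_pow_pos m)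
    have htop : i / 2 ^ m < 2 :=
      (Nat.div_lt_iff_lt_mul (Nat.two_pow_pos m)).2 (by rw [pow_succ] at hi; omega)
    rw [← Nat.mod_add_div i (2 ^ m)] at hi ⊢
    generalize i % 2 ^ m = a at *
    generalize i / 2 ^ m = t at *
    rw [wt2_add_two_pow_mul_s15 hlow]
    interval_cases t
    · rw [mul_zero, add_zero, Nat.mod_eq_of_lt (by rw [pow_succ]; omega), wt2_eq_mod_add_wt2_div]
      simp
    · rw [mul_one, pow_succ, show 2 * (a + 2 ^ m) = (2 * a + 1) + (2 ^ m * 2 - 1) by omega,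
        Nat.add_mod_right, Nat.mod_eq_of_lt (by rw [pow_succ] at hi; omega),
        wt2_eq_mod_add_wt2_div, show (2 * a + 1) / 2 = a by omega, wt2_eq_mod_add_wt2_div 1]
      simp
      omega

end BinaryWeight

section BooleanCube

open MvPolynomial

variable {σ R : Type*} [DecidableEq σ]

def cubeVertex [Zero R] [One R] (S : Finset σ) : σ → R := fun i => if i ∈ S then 1 else 0

lemma RingHom.comp_cubeVertex {R' : Type*} [Semiring R] [Semiring R'] (φ : R →+* R')
    (S : Finset σ) : φ ∘ cubeVertex S = cubeVertex S := by
  ext i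
  simp [cubeVertex, apply_ite φ]

theorem cubeVertex_bijective [Fintype σ] :
    Function.Bijective (cubeVertex : Finset σ → σ → ZMod 2) := by
  refine ⟨fun S T hST => ?_, fun v => ⟨univ.filter (v · = 1), funext fun i => ?_⟩⟩
  · ext i
    have := congrFun hST i
    by_cases hS : i ∈ S <;> by_cases hT : i ∈ T <;> simp_all [cubeVertex]
  · simp only [cubeVertex, mem_filter, mem_univ, true_and]
    generalize v i = b
    revert b
    decide

lemma eval_cubeVertex_insert_monomial [CommSemiring R] {d : σ →₀ ℕ} {i : σ}
    (hi : i ∉ d.support) (S : Finset σ) (a : R) :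
    eval (cubeVertex (insert i S)) (monomial d a) = eval (cubeVertex S) (monomial d a) := by
  simp only [eval_monomial]
  congr 1
  refine Finsupp.prod_congr fun j hj => ?_
  have hji : j ≠ i := fun h => hi (h ▸ hj)
  simp [cubeVertex, hji]

/-- A monomial of degree `< #T` misses some variable `i ∈ T`, so the subcube sum pairs `S` with
`insert i S` and cancels in characteristic two. -/
theorem sum_powerset_eval_cubeVertex_eq_zero [CommRing R] [CharP R 2] (Q : MvPolynomial σ R)
    {T : Finset σ} (hQ : Q.totalDegree < #T) : ∑ S ∈ T.powerset, eval (cubeVertex S) Q = 0 := by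
  conv_lhs => enter [2, S]; rw [Q.as_sum, map_sum]
  rw [sum_comm]
  refine sum_eq_zero fun d hd => ?_
  have hsupp : #d.support ≤ d.sum fun _ e => e := by
    simpa [Finsupp.sum] using card_nsmul_le_sum d.support d 1 fun i hi =>
      Nat.one_le_iff_ne_zero.2 (Finsupp.mem_support_iff.1 hi)
  obtain ⟨i, hiT, hid⟩ :=
    exists_mem_notMem_of_card_lt_card (hsupp.trans_lt ((le_totalDegree hd).trans_lt hQ))
  rw [← insert_erase hiT, sum_powerset_insert (notMem_erase i T)]
  simp only [eval_cubeVertex_insert_monomial hid]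
  exact CharTwo.add_self_eq_zero _

lemma eval_cubeVertex_sum_C_mul_X [CommSemiring R] [Fintype σ] (β : σ → R) (S : Finset σ) :
    eval (cubeVertex S) (∑ i, C (β i) * X i) = ∑ i ∈ S, β i := by
  simp [cubeVertex, sum_ite_mem]

/-- Writing `k = 2q + b`, `(∑ β)^k = (∑ β²)^q (∑ β)^b` in characteristic two, so the power `k` of
a linear form costs one degree per binary digit of `k`. -/
theorem exists_isHomogeneous_eval_cubeVertex_eq_pow [CommRing R] [CharP R 2] [Fintype σ]
    (k : ℕ) (β : σ → R) :
    ∃ P : MvPolynomial σ R, P.IsHomogeneous (wt2 k) ∧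
      ∀ S, eval (cubeVertex S) P = (∑ i ∈ S, β i) ^ k := by
  induction k using Nat.strong_induction_on generalizing β with
  | _ k ih =>
    rcases Nat.eq_zero_or_pos k with rfl | hk
    · exact ⟨1, isHomogeneous_one σ R, fun S => by simp⟩
    obtain ⟨P, hP, hPeval⟩ := ih (k / 2) (by omega) (β ^ 2)
    refine ⟨P * (∑ i, C (β i) * X i) ^ (k % 2), ?_, fun S => ?_⟩
    · have hlin : (∑ i, C (β i) * X i).IsHomogeneous 1 :=
        IsHomogeneous.sum _ _ _ fun i _ => isHomogeneous_C_mul_X _ _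
      convert hP.mul (hlin.pow (k % 2)) using 1
      rw [wt2_eq_mod_add_wt2_div k]
      ring
    · rw [map_mul, map_pow, hPeval, eval_cubeVertex_sum_C_mul_X]
      simp only [Pi.pow_apply]
      rw [← sum_pow_char, ← pow_mul, ← pow_add, Nat.div_add_mod]

theorem sum_powerset_sum_pow_eq_zero [CommRing R] [CharP R 2] [Fintype σ] (β : σ → R) {k : ℕ}
    {T : Finset σ} (hk : wt2 k < #T) : ∑ S ∈ T.powerset, (∑ i ∈ S, β i) ^ k = 0 := by
  obtain ⟨P, hP, hPeval⟩ := exists_isHomogeneous_eval_cubeVertex_eq_pow k β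
  simp_rw [← hPeval]
  exact sum_powerset_eval_cubeVertex_eq_zero P (hP.totalDegree_le.trans_lt hk)

/-- Möbius inversion on the Boolean lattice, where all signs are `+1` in characteristic two. -/
theorem sum_powerset_sum_powerset_eq [CommRing R] [CharP R 2] (g : Finset σ → R)
    (U : Finset σ) : ∑ T ∈ U.powerset, ∑ S ∈ T.powerset, g S = g U := by
  rw [sum_comm' (t' := U.powerset) (s' := fun S => Icc S U) (fun T S => by
    simp only [mem_powerset, mem_Icc]
    constructor
    · rintro ⟨hTU, hST⟩; exact ⟨⟨hST, hTU⟩, hST.trans hTU⟩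
    · rintro ⟨⟨hST, hTU⟩, -⟩; exact ⟨hTU, hST⟩)]
  rw [sum_eq_single_of_mem U (mem_powerset_self U)]
  · simp
  · intro S hS hSU
    rw [sum_const, card_Icc_finset (mem_powerset.1 hS), nsmul_eq_mul]
    have hlt : #S < #U := card_lt_card (ssubset_of_subset_of_ne (mem_powerset.1 hS) hSU)
    simp [CharTwo.two_eq_zero, zero_pow (by omega : #U - #S ≠ 0)]

/-- The witness is the algebraic normal form of `g`: the coefficient of `∏_{i ∈ T} X i` is the
subcube sum of `g` over `T`. -/
theorem exists_isMultilinear_eval_eq {m r : ℕ} (g : (Fin m → ZMod 2) → ZMod 2)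
    (hg : ∀ T : Finset (Fin m), r < #T → ∑ S ∈ T.powerset, g (cubeVertex S) = 0) :
    ∃ f : MvPolynomial (Fin m) (ZMod 2), IsMultilinear f ∧ f.totalDegree ≤ r ∧
      ∀ v, eval v f = g v := by
  set μ : Finset (Fin m) → ZMod 2 := fun T => ∑ S ∈ T.powerset, g (cubeVertex S)
  set e : Finset (Fin m) → Fin m →₀ ℕ := fun T => ∑ i ∈ T, Finsupp.single i 1
  have hmonomial : ∀ T (c : ZMod 2), monomial (e T) c = C c * ∏ i ∈ T, X i := fun T c =>
    monomial_sum_index _ _ _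
  refine ⟨∑ T, monomial (e T) (μ T), fun s hs i => ?_, ?_, fun v => ?_⟩
  · obtain ⟨T, -, hT⟩ := mem_biUnion.1 (support_sum hs)
    rw [mem_singleton.1 (support_monomial_subset hT)]
    simp only [e, Finsupp.finsetSum_apply, Finsupp.single_apply]
    rw [sum_ite_eq']
    split_ifs <;> omega
  · refine (totalDegree_finsetSum _ _).trans (Finset.sup_le fun T _ => ?_)
    by_cases hT : #T ≤ r
    · rw [hmonomial]
      refine (totalDegree_mul _ _).trans ?_
      rw [totalDegree_C, zero_add]
      refine (totalDegree_finsetProd _ _).trans ?_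
      simpa using hT
    · rw [show μ T = 0 from hg T (by omega), map_zero, totalDegree_zero]
      exact Nat.zero_le r
  · obtain ⟨U, rfl⟩ := cubeVertex_bijective.2 v
    simp only [hmonomial, map_sum, map_mul, eval_C, map_prod, eval_X, cubeVertex, prod_boole,
      mul_boole]
    simp only [← subset_iff, ← mem_powerset, sum_ite_mem, univ_inter]
    exact sum_powerset_sum_powerset_eq _ U

end BooleanCube

namespace IsPrimitiveRoot

variable {K : Type*} [CommRing K] {α : K} {n : ℕ}

lemma pow_eq_pow_of_natCast_eq (hα : IsPrimitiveRoot α n) {a b : ℕ}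
    (hab : (a : ZMod n) = b) : α ^ a = α ^ b := by
  rw [← pow_mod_orderOf, ← pow_mod_orderOf α b, ← hα.eq_orderOf,
    (ZMod.natCast_eq_natCast_iff' a b n).1 hab]

variable [IsDomain K]

theorem sum_range_pow_pow (hα : IsPrimitiveRoot α n) (a : ℕ) :
    ∑ k ∈ range n, (α ^ a) ^ k = if n ∣ a then (n : K) else 0 := by
  split_ifs with ha
  · simp [(hα.pow_eq_one_iff_dvd a).2 ha]
  · have hne : α ^ a - 1 ≠ 0 := sub_ne_zero.2 (mt (hα.pow_eq_one_iff_dvd a).1 ha)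
    have := geom_sum_mul (α ^ a) n
    rw [← pow_mul, mul_comm a n, pow_mul, hα.pow_eq_one, one_pow, sub_self] at this
    exact (mul_eq_zero.1 this).resolve_right hne

/-- Discrete Fourier inversion over the powers of a primitive `n`-th root of unity. -/
theorem sum_range_sum_mul_pow (hα : IsPrimitiveRoot α n) (x : Fin n → K) (j : Fin n) :
    ∑ k ∈ range n, (∑ i : Fin n, x i * α ^ ((n - k) * i)) * α ^ (k * j) = n * x j := by
  have hexp : ∀ k ∈ range n, ∀ i : Fin n,
      α ^ ((n - k) * i) * α ^ (k * j) = (α ^ (n + j - i)) ^ k := by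
    intro k hk i
    rw [← pow_add, ← pow_mul]
    apply hα.pow_eq_pow_of_natCast_eq
    have hk : k ≤ n := (mem_range.1 hk).le
    have hi : (i : ℕ) ≤ n + j := by omega
    push_cast [Nat.cast_sub hk, Nat.cast_sub hi, ZMod.natCast_self]
    ring
  have hdvd : ∀ i : Fin n, n ∣ n + j - i ↔ i = j := by
    intro i
    refine ⟨fun h => ?_, fun h => by simp [h]⟩
    rcases le_or_gt (i : ℕ) j with hij | hij
    · rw [show n + j - i = n + (j - i) by omega, Nat.dvd_add_right (dvd_refl n)] at h
      have := Nat.eq_zero_of_dvd_of_lt h (by omega)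
      exact Fin.ext (by omega)
    · have := Nat.eq_zero_of_dvd_of_lt h (by omega)
      omega
  simp_rw [sum_mul, mul_assoc]
  rw [sum_comm]
  simp_rw [← mul_sum]
  rw [sum_congr rfl fun i _ => by rw [sum_congr rfl fun k hk => hexp k hk i, hα.sum_range_pow_pow]]
  simp_rw [hdvd, mul_ite, mul_zero]
  rw [sum_ite_eq', if_pos (mem_univ _), mul_comm]

end IsPrimitiveRoot

section Polynomial

open Polynomial

variable {K : Type*} [Field K]

theorem Polynomial.prod_X_sub_C_dvd_iff {ι : Type*} {s : Finset ι} {a : ι → K}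
    (ha : Set.InjOn a s) (p : K[X]) :
    ∏ i ∈ s, (X - C (a i)) ∣ p ↔ ∀ i ∈ s, p.IsRoot (a i) := by
  refine ⟨fun h i hi => dvd_iff_isRoot.1 ((dvd_prod_of_mem (fun i => X - C (a i)) hi).trans h),
    fun h => ?_⟩
  refine prod_dvd_of_coprime (fun i hi j hj hij => ?_) fun i hi => dvd_iff_isRoot.2 (h i hi)
  exact isCoprime_X_sub_C_of_isUnit_sub (sub_ne_zero.2 (ha.ne hi hj hij)).isUnit

instance charP_two_of_algebra_zmod [Algebra (ZMod 2) K] : CharP K 2 :=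
  charP_of_injective_algebraMap' (ZMod 2) 2

variable [Algebra (ZMod 2) K]

theorem Polynomial.exists_map_eq_of_map_frobenius_eq {P : K[X]}
    (hP : P.map (frobenius K 2) = P) : ∃ g : (ZMod 2)[X], g.map (algebraMap (ZMod 2) K) = P := by
  rw [← mem_lifts, lifts_iff_coeff_lifts]
  intro k
  have hk : P.coeff k ^ 2 = P.coeff k := by
    simpa [coeff_map, frobenius_def] using congrArg (coeff · k) hP
  rcases eq_zero_or_one_of_sq_eq_self hk with h | h
  · exact ⟨0, by simp [h]⟩
  · exact ⟨1, by simp [h]⟩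

/-- A set of exponents closed under doubling modulo `n` is permuted by it, and so the
Frobenius map permutes the roots. -/
theorem IsPrimitiveRoot.map_frobenius_prod_X_sub_C {α : K} {n : ℕ} (hα : IsPrimitiveRoot α n)
    (hn : Odd n) {D : Finset ℕ} (hD : ∀ h ∈ D, h < n ∧ 2 * h % n ∈ D) :
    (∏ h ∈ D, (X - C (α ^ h))).map (frobenius K 2) = ∏ h ∈ D, (X - C (α ^ h)) := by
  have hinj : Set.InjOn (fun h => 2 * h % n) D := fun a ha b hb hab => by
    have := Nat.ModEq.cancel_left_of_coprime (Nat.coprime_two_right.2 hn) hab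
    rwa [Nat.ModEq, Nat.mod_eq_of_lt (hD a ha).1, Nat.mod_eq_of_lt (hD b hb).1] at this
  have himage : D.image (fun h => 2 * h % n) = D :=
    eq_of_subset_of_card_le (image_subset_iff.2 fun h hh => (hD h hh).2)
      (card_image_of_injOn hinj).ge
  conv_rhs => rw [← himage, prod_image hinj]
  rw [Polynomial.map_prod]
  refine prod_congr rfl fun h _ => ?_
  rw [Polynomial.map_sub, map_X, map_C, frobenius_def, ← pow_mul, mul_comm, hα.eq_orderOf,
    pow_mod_orderOf]

end Polynomial

section PuncturedReedMuller

variable {K : Type*} [Field K] [Algebra (ZMod 2) K] {m n r : ℕ} {α : K}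
  {coords : K → Fin m → ZMod 2}

def ofCoords (α : K) (v : Fin m → ZMod 2) : K :=
  ∑ i, algebraMap (ZMod 2) K (v i) * α ^ (i : ℕ)

/-- The value `c(α^h)` of the word polynomial `c(X) = ∑ c_i X^i`. -/
def syndrome (α : K) (c : Fin n → ZMod 2) (h : ℕ) : K :=
  ∑ i : Fin n, algebraMap (ZMod 2) K (c i) * α ^ (h * (i : ℕ))

def puncturedRM (α : K) (coords : K → Fin m → ZMod 2) (n r : ℕ) : Set (Fin n → ZMod 2) :=
  {c | ∃ f : MvPolynomial (Fin m) (ZMod 2), IsMultilinear f ∧ f.totalDegree ≤ r ∧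
    ∀ i : Fin n, c i = MvPolynomial.eval (coords (α ^ (i : ℕ))) f}

def bchDefiningSet (m r n : ℕ) : Finset ℕ :=
  (range n).filter (fun h => 1 ≤ wt2 h ∧ wt2 h ≤ m - r - 1)

@[simp] lemma ofCoords_zero : ofCoords α (0 : Fin m → ZMod 2) = 0 := by
  simp [ofCoords]

lemma ofCoords_cubeVertex (S : Finset (Fin m)) :
    ofCoords α (cubeVertex S) = ∑ i ∈ S, α ^ (i : ℕ) := by
  simp [ofCoords, cubeVertex, apply_ite, sum_ite_mem]

lemma injOn_coords_pow (hα : IsPrimitiveRoot α n)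
    (hcoords : Function.LeftInverse (ofCoords α) coords) :
    Set.InjOn (fun i => coords (α ^ i)) (range n) :=
  fun _ hi _ hj hij => hα.injOn_pow hi hj (hcoords.injective hij)

lemma image_coords_pow_range (hn : n = 2 ^ m - 1) (hα : IsPrimitiveRoot α n)
    (hcoords : Function.LeftInverse (ofCoords α) coords) :
    (range n).image (fun i => coords (α ^ i)) = univ.erase 0 := by
  refine eq_of_subset_of_card_le (image_subset_iff.2 fun i hi => mem_erase.2 ⟨fun h0 => ?_,
    mem_univ _⟩) ?_
  · have := hcoords (α ^ i)
    rw [h0, ofCoords_zero] at this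
    exact pow_ne_zero i (hα.ne_zero (by have := mem_range.1 hi; omega)) this.symm
  · rw [card_image_of_injOn (injOn_coords_pow hα hcoords), card_erase_of_mem (mem_univ _),
      card_univ, Fintype.card_fun, ZMod.card, Fintype.card_fin, card_range, hn]

theorem syndrome_eq_zero_of_mem_puncturedRM (hn : n = 2 ^ m - 1) (hα : IsPrimitiveRoot α n)
    (hcoords : Function.LeftInverse (ofCoords α) coords) {c : Fin n → ZMod 2}
    (hc : c ∈ puncturedRM α coords n r) {h : ℕ} (h1 : 1 ≤ wt2 h) (h2 : wt2 h ≤ m - r - 1) :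
    syndrome α c h = 0 := by
  obtain ⟨f, -, hf, hcf⟩ := hc
  obtain ⟨P, hP, hPeval⟩ :=
    exists_isHomogeneous_eval_cubeVertex_eq_pow h (fun i : Fin m => α ^ (i : ℕ))
  let ι := algebraMap (ZMod 2) K
  let F : (Fin m → ZMod 2) → K := fun v => ι (MvPolynomial.eval v f) * ofCoords α v ^ h
  have hh : h ≠ 0 := by rintro rfl; simp at h1
  have hdeg : (f.map ι * P).totalDegree < #(univ : Finset (Fin m)) := by
    have hmap : (f.map ι).totalDegree ≤ f.totalDegree :=
      sup_mono (MvPolynomial.support_map_subset ι f)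
    have := MvPolynomial.totalDegree_mul (f.map ι) P
    have := hP.totalDegree_le
    rw [card_univ, Fintype.card_fin]
    omega
  calc syndrome α c h = ∑ i ∈ range n, F (coords (α ^ i)) := by
        rw [syndrome, ← Fin.sum_univ_eq_sum_range]
        refine sum_congr rfl fun i _ => ?_
        simp only [F, ι, hcf, hcoords (α ^ (i : ℕ)), ← pow_mul, mul_comm h]
    _ = ∑ v ∈ univ.erase 0, F v := by
        rw [← image_coords_pow_range hn hα hcoords, sum_image (injOn_coords_pow hα hcoords)]
    _ = ∑ v, F v := sum_erase _ (by simp [F, hh])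
    _ = ∑ S ∈ univ.powerset, MvPolynomial.eval (cubeVertex S) (f.map ι * P) := by
        rw [powerset_univ, ← cubeVertex_bijective.sum_comp]
        refine sum_congr rfl fun S _ => ?_
        rw [map_mul, hPeval, ← ofCoords_cubeVertex]
        simp only [F, MvPolynomial.map_eval, ι.comp_cubeVertex]
    _ = 0 := sum_powerset_eval_cubeVertex_eq_zero _ hdeg

/-- Fourier inversion expresses `c` through its syndromes, and the syndromes at `n - k` with
`wt2 k > r` are checks of the code since `wt2 (n - k) = m - wt2 k`. -/
theorem algebraMap_eq_sum_syndrome_mul_pow (hn : n = 2 ^ m - 1) (hodd : Odd n)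
    (hα : IsPrimitiveRoot α n) {c : Fin n → ZMod 2}
    (hc : ∀ h < n, 1 ≤ wt2 h → wt2 h ≤ m - r - 1 → syndrome α c h = 0) (j : Fin n) :
    algebraMap (ZMod 2) K (c j) =
      ∑ k ∈ (range n).filter (wt2 · ≤ r), syndrome α c (n - k) * (α ^ (j : ℕ)) ^ k := by
  have hn1 : (n : K) = 1 := by
    obtain ⟨q, rfl⟩ := hodd
    simp [CharTwo.two_eq_zero]
  rw [sum_filter_of_ne fun k hk hne => ?_]
  · rw [← one_mul (algebraMap _ K (c j)), ← hn1,
      ← hα.sum_range_sum_mul_pow (fun i => algebraMap (ZMod 2) K (c i)) j]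
    exact sum_congr rfl fun k _ => by rw [syndrome, ← pow_mul, mul_comm k]
  · by_contra hwk
    apply hne
    have hk := mem_range.1 hk
    have hlt : k < 2 ^ m := by omega
    have hw := wt2_two_pow_sub_one_sub hlt
    have hle := wt2_le_of_lt_two_pow hlt
    have hpos : wt2 (2 ^ m - 1 - k) ≠ 0 := fun h0 => by
      have := wt2_eq_zero_iff.1 h0
      omega
    have hk0 : k ≠ 0 := by
      rintro rfl
      simp at hwk
    rw [hc (n - k) (by omega) (by subst hn; omega) (by subst hn; omega), zero_mul]

theorem mem_puncturedRM_of_syndrome_eq_zero (hn : n = 2 ^ m - 1) (hodd : Odd n)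
    (hα : IsPrimitiveRoot α n) (hcoords : Function.LeftInverse (ofCoords α) coords)
    {c : Fin n → ZMod 2} (hc : ∀ h < n, 1 ≤ wt2 h → wt2 h ≤ m - r - 1 → syndrome α c h = 0) :
    c ∈ puncturedRM α coords n r := by
  let ι := algebraMap (ZMod 2) K
  let Φ : (Fin m → ZMod 2) → K := fun v =>
    ∑ k ∈ (range n).filter (wt2 · ≤ r), syndrome α c (n - k) * ofCoords α v ^ k
  have hΦc : ∀ j : Fin n, Φ (coords (α ^ (j : ℕ))) = ι (c j) := fun j => by
    simp only [Φ, ι, hcoords (α ^ (j : ℕ))]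
    exact (algebraMap_eq_sum_syndrome_mul_pow hn hodd hα hc j).symm
  have hΦ : ∀ v, ∃ b, ι b = Φ v := by
    intro v
    by_cases hv : v = 0
    · refine ⟨∑ i, c i, ?_⟩
      have h0 : 0 ∈ (range n).filter (wt2 · ≤ r) := mem_filter.2 ⟨mem_range.2 hodd.pos, by simp⟩
      simp only [Φ, hv, ofCoords_zero]
      rw [sum_eq_single_of_mem 0 h0 fun k _ hk => by simp [hk]]
      simp [ι, syndrome, pow_mul, hα.pow_eq_one]
    · have hv' : v ∈ (range n).image (fun i => coords (α ^ i)) := by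
        rw [image_coords_pow_range hn hα hcoords]
        exact mem_erase.2 ⟨hv, mem_univ v⟩
      obtain ⟨j, hj, rfl⟩ := mem_image.1 hv'
      exact ⟨c ⟨j, mem_range.1 hj⟩, (hΦc ⟨j, mem_range.1 hj⟩).symm⟩
  choose g hg using hΦ
  have hsubcube : ∀ T : Finset (Fin m), r < #T → ∑ S ∈ T.powerset, g (cubeVertex S) = 0 := by
    intro T hT
    apply ι.injective
    rw [map_sum, map_zero]
    simp only [hg, Φ, ofCoords_cubeVertex]
    rw [sum_comm]
    refine sum_eq_zero fun k hk => ?_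
    rw [← mul_sum, sum_powerset_sum_pow_eq_zero _ ((mem_filter.1 hk).2.trans_lt hT), mul_zero]
  obtain ⟨f, hml, hdeg, hfg⟩ := exists_isMultilinear_eval_eq g hsubcube
  exact ⟨f, hml, hdeg, fun j => ι.injective (by rw [hfg, hg, hΦc])⟩

lemma two_mul_mod_mem_bchDefiningSet (hn : n = 2 ^ m - 1) {x : ℕ}
    (hx : x ∈ bchDefiningSet m r n) : 2 * x % n ∈ bchDefiningSet m r n := by
  obtain ⟨hxn, hxw⟩ := mem_filter.1 hx
  have hxn := mem_range.1 hxn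
  subst hn
  rw [bchDefiningSet, mem_filter, mem_range, wt2_two_mul_mod hxn]
  exact ⟨Nat.mod_lt _ (by omega), hxw⟩

lemma mul_two_pow_mod_mem_bchDefiningSet (hn : n = 2 ^ m - 1) {i : ℕ}
    (hi : i ∈ bchDefiningSet m r n) (j : ℕ) : i * 2 ^ j % n ∈ bchDefiningSet m r n := by
  induction j with
  | zero => rwa [pow_zero, mul_one, Nat.mod_eq_of_lt (mem_range.1 (mem_filter.1 hi).1)]
  | succ j ih =>
    rw [pow_succ, ← mul_assoc, mul_comm _ 2, ← Nat.mul_mod_mod]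
    exact two_mul_mod_mem_bchDefiningSet hn ih

open Polynomial

theorem exists_map_eq_prod_bchDefiningSet (hn : n = 2 ^ m - 1) (hodd : Odd n)
    (hα : IsPrimitiveRoot α n) :
    ∃ g : (ZMod 2)[X],
      g.map (algebraMap (ZMod 2) K) = ∏ h ∈ bchDefiningSet m r n, (X - C (α ^ h)) :=
  exists_map_eq_of_map_frobenius_eq <| hα.map_frobenius_prod_X_sub_C hodd fun _ hh =>
    ⟨mem_range.1 (mem_filter.1 hh).1, two_mul_mod_mem_bchDefiningSet hn hh⟩

lemma eval_map_sum_monomial (c : Fin n → ZMod 2) (h : ℕ) :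
    ((∑ i : Fin n, monomial (i : ℕ) (c i)).map (algebraMap (ZMod 2) K)).eval (α ^ h) =
      syndrome α c h := by
  simp [Polynomial.map_sum, eval_finsetSum, syndrome, ← pow_mul, mul_comm]

end PuncturedReedMuller

theorem punctured_RM_is_BCH_general (m r n : ℕ) (hm : 1 ≤ m)
    (hn : n = 2 ^ m - 1)
    (α : GaloisField 2 m) (hα : orderOf α = n)
    (coords : GaloisField 2 m → Fin m → ZMod 2)
    (hcoords : ∀ x : GaloisField 2 m,
      ∑ i : Fin m, algebraMap (ZMod 2) (GaloisField 2 m) (coords x i) * α ^ (i : ℕ) = x) :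
    ({c : Fin n → ZMod 2 | ∃ f : MvPolynomial (Fin m) (ZMod 2),
        IsMultilinear f ∧ f.totalDegree ≤ r ∧
        ∀ i : Fin n, c i = MvPolynomial.eval (coords (α ^ (i : ℕ))) f}
      = {c : Fin n → ZMod 2 | ∀ h : ℕ, 1 ≤ wt2 h → wt2 h ≤ m - r - 1 →
          ∑ i : Fin n,
            algebraMap (ZMod 2) (GaloisField 2 m) (c i) * α ^ (h * (i : ℕ)) = 0}) ∧
    (∃ g₂ : Polynomial (ZMod 2),
      g₂.map (algebraMap (ZMod 2) (GaloisField 2 m)) =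
        ∏ h ∈ (Finset.range n).filter (fun h => 1 ≤ wt2 h ∧ wt2 h ≤ m - r - 1),
          (Polynomial.X - Polynomial.C (α ^ h)) ∧
      ∀ c : Fin n → ZMod 2,
        ((∃ f : MvPolynomial (Fin m) (ZMod 2), IsMultilinear f ∧
            f.totalDegree ≤ r ∧
            ∀ i : Fin n, c i = MvPolynomial.eval (coords (α ^ (i : ℕ))) f)
          ↔ g₂ ∣ ∑ i : Fin n, Polynomial.monomial (i : ℕ) (c i))) ∧
    (∀ i ∈ (Finset.range n).filter (fun h => 1 ≤ wt2 h ∧ wt2 h ≤ m - r - 1),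
      ∀ j : ℕ, i * 2 ^ j % n ∈
        (Finset.range n).filter (fun h => 1 ≤ wt2 h ∧ wt2 h ≤ m - r - 1)) := by
  have hprim : IsPrimitiveRoot α n := hα ▸ IsPrimitiveRoot.orderOf α
  have hodd : Odd n :=
    hn ▸ Nat.Even.sub_odd Nat.one_le_two_pow (Nat.even_pow.2 ⟨even_two, by omega⟩) odd_one
  have hRM : ∀ c, c ∈ puncturedRM α coords n r ↔ ∀ h ∈ bchDefiningSet m r n,
      syndrome α c h = 0 := fun c =>
    ⟨fun hc h hh => syndrome_eq_zero_of_mem_puncturedRM hn hprim hcoords hc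
        (mem_filter.1 hh).2.1 (mem_filter.1 hh).2.2,
      fun hc => mem_puncturedRM_of_syndrome_eq_zero hn hodd hprim hcoords fun h hlt h1 h2 =>
        hc h (mem_filter.2 ⟨mem_range.2 hlt, h1, h2⟩)⟩
  obtain ⟨g₂, hg₂⟩ := exists_map_eq_prod_bchDefiningSet (r := r) hn hodd hprim
  refine ⟨?_, ⟨g₂, hg₂, fun c => (hRM c).trans ?_⟩,
    fun i hi j => mul_two_pow_mod_mem_bchDefiningSet hn hi j⟩
  · ext c
    exact ⟨fun hc h h1 h2 => syndrome_eq_zero_of_mem_puncturedRM hn hprim hcoords hc h1 h2,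
      fun hc => (hRM c).2 fun h hh => hc h (mem_filter.1 hh).2.1 (mem_filter.1 hh).2.2⟩
  · rw [← Polynomial.map_dvd_map' (algebraMap (ZMod 2) (GaloisField 2 m)), hg₂,
      Polynomial.prod_X_sub_C_dvd_iff (s := bchDefiningSet m r n)
        (hprim.injOn_pow.mono (coe_subset.2 (filter_subset _ _)))]
    simp only [Polynomial.IsRoot.def, eval_map_sum_monomial]

/-- Let `n = 2^m − 1`, `α` primitive in `F_{2^m}`, `0 ≤ r ≤ m−1`.  The
reordered punctured Reed-Muller code `R(r,m)*` equals the binary BCH code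
`{c ∈ F_2^n : ∑_i ι(c_i)·α^{h·i} = 0 for all h with 1 ≤ wt₂(h) ≤ m−r−1}`;
moreover it is the cyclic code with generator polynomial
`∏_{h : 1 ≤ wt₂(h) ≤ m−r−1} (x − α^h)` (a polynomial with coefficients in
`F_2`), and its defining set `{h < n : 1 ≤ wt₂(h) ≤ m−r−1}` is a union of
cyclotomic cosets.  Hence the punctured Reed-Muller code of order `r` is, after
this reordering of coordinates, a BCH code. -/
theorem punctured_RM_is_BCH (m r n : ℕ) (hm : 1 ≤ m) (hr : r < m)
    (hn : n = 2 ^ m - 1)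
    (α : GaloisField 2 m) (hα : orderOf α = n)
    (coords : GaloisField 2 m → Fin m → ZMod 2)
    (hcoords : ∀ x : GaloisField 2 m,
      ∑ i : Fin m, algebraMap (ZMod 2) (GaloisField 2 m) (coords x i) * α ^ (i : ℕ) = x) :
    ({c : Fin n → ZMod 2 | ∃ f : MvPolynomial (Fin m) (ZMod 2),
        IsMultilinear f ∧ f.totalDegree ≤ r ∧
        ∀ i : Fin n, c i = MvPolynomial.eval (coords (α ^ (i : ℕ))) f}
      = {c : Fin n → ZMod 2 | ∀ h : ℕ, 1 ≤ wt2 h → wt2 h ≤ m - r - 1 →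
          ∑ i : Fin n,
            algebraMap (ZMod 2) (GaloisField 2 m) (c i) * α ^ (h * (i : ℕ)) = 0}) ∧
    (∃ g₂ : Polynomial (ZMod 2),
      g₂.map (algebraMap (ZMod 2) (GaloisField 2 m)) =
        ∏ h ∈ (Finset.range n).filter (fun h => 1 ≤ wt2 h ∧ wt2 h ≤ m - r - 1),
          (Polynomial.X - Polynomial.C (α ^ h)) ∧
      ∀ c : Fin n → ZMod 2,
        ((∃ f : MvPolynomial (Fin m) (ZMod 2), IsMultilinear f ∧
            f.totalDegree ≤ r ∧
            ∀ i : Fin n, c i = MvPolynomial.eval (coords (α ^ (i : ℕ))) f)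
          ↔ g₂ ∣ ∑ i : Fin n, Polynomial.monomial (i : ℕ) (c i))) ∧
    (∀ i ∈ (Finset.range n).filter (fun h => 1 ≤ wt2 h ∧ wt2 h ≤ m - r - 1),
      ∀ j : ℕ, i * 2 ^ j % n ∈
        (Finset.range n).filter (fun h => 1 ≤ wt2 h ∧ wt2 h ≤ m - r - 1)) :=
  punctured_RM_is_BCH_general m r n hm hn α hα coords hcoords
end

section
/- Let k < n, let G_R ∈ F_2^{k×(n−k)}, and let C = { (u·G_R, u) : u ∈ F_2^k } ⊆ F_2^n be the systematic linear code with generator matrix (G_R | I_k), where the last k coordinates are the systematic positions. Let c ∈ C, let e = (e_red, e_sys) ∈ F_2^{n−k} × F_2^k be an error, and let r̄ = c + e. Define c_w = (r̄_sys·G_R, r̄_sys) ∈ C, where r̄_sys is the systematic part of r̄, and set r = r̄ + c_w. Suppose B ⊆ {1,…,k} with |B| = μ contains the support of e_sys, G ⊆ {1,…,n−k} with |G| = μ satisfies e_red|_G = 0, and the μ×μ submatrix D of G_R formed by the rows indexed by B and columns indexed by G is invertible. Then e_sys|_B = r|_G · D^{−1}, where r|_G denotes the restriction of the redundancy part of r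 to the columns G; together with e_sys being zero outside B, this determines e_sys, and hence c, completely (correctness of redundancy set decoding). -/
/-!
In characteristic two, re-encoding the received systematic part cancels the codeword, so the
redundancy part of `r` is `e_red + e_sys · G_R`. On the error-free columns `G` this is
`e_sys · G_R` restricted to `G`, and since `e_sys` lives on `B` it equals `e_sys|_B · D`;
multiplying by `D⁻¹` recovers `e_sys|_B`.
-/

open Matrix

theorem CharTwo.vecMul_add_add_vecMul_add {m n R : Type*} [Fintype m] [Semiring R] [CharP R 2]
    (A : Matrix m n R) (u x : m → R) (e : n → R) :
    u ᵥ* A + e + (u + x) ᵥ* A = e + x ᵥ* A := by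
  have hu : u ᵥ* A + u ᵥ* A = 0 := funext fun _ => CharTwo.add_self_eq_zero _
  rw [add_vecMul, add_comm (u ᵥ* A), add_assoc, ← add_assoc (u ᵥ* A), hu, zero_add]

theorem Matrix.vecMul_submatrix_of_support_subset_range {l m n o R : Type*} [Fintype l]
    [Fintype m] [NonUnitalNonAssocSemiring R] (A : Matrix m n R) {x : m → R} {β : l → m}
    (hβ : Function.Injective β) (hx : Function.support x ⊆ Set.range β) (γ : o → n) :
    (x ∘ β) ᵥ* A.submatrix β γ = (x ᵥ* A) ∘ γ := by
  funext s
  refine Finset.sum_of_injOn β hβ.injOn (by simp) (fun i _ hi => ?_) fun _ _ => rfl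
  have hxi : x i = 0 := Function.notMem_support.mp fun h => hi (by simpa using hx h)
  simp [hxi]

theorem redundancy_set_decoding_correct_general (n k μ : ℕ)
    (GR : Matrix (Fin k) (Fin (n - k)) (ZMod 2))
    (u : Fin k → ZMod 2)
    (ered : Fin (n - k) → ZMod 2) (esys : Fin k → ZMod 2)
    (β : Fin μ → Fin k) (hβ : Function.Injective β)
    (γ : Fin μ → Fin (n - k))
    (hsupp : ∀ i : Fin k, esys i ≠ 0 → ∃ t, β t = i)
    (hered : ∀ t, ered (γ t) = 0)
    (hD : IsUnit (GR.submatrix β γ).det) :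
    ∀ t : Fin μ, esys (β t) =
      Matrix.vecMul
        (fun s => (Matrix.vecMul u GR + ered + Matrix.vecMul (u + esys) GR) (γ s))
        (GR.submatrix β γ)⁻¹ t := by
  have hsyndrome : (fun s => (u ᵥ* GR + ered + (u + esys) ᵥ* GR) (γ s)) =
      (esys ∘ β) ᵥ* GR.submatrix β γ := by
    rw [vecMul_submatrix_of_support_subset_range GR hβ (fun i hi => hsupp i hi) γ,
      CharTwo.vecMul_add_add_vecMul_add]
    funext s
    simp [hered s]
  intro t
  rw [hsyndrome, vecMul_vecMul, mul_nonsing_inv _ hD, vecMul_one]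
  rfl

/-- **Correctness of redundancy set decoding.**  Let `C = {(u·G_R, u)}` be the
systematic code with generator matrix `(G_R | I_k)`.  A codeword determined by
`u` is corrupted by an error `e = (e_red, e_sys)`, giving
`r̄ = (u·G_R + e_red, u + e_sys)`.  Re-encoding the systematic part of `r̄`
yields `c_w = ((u+e_sys)·G_R, u+e_sys)` and `r = r̄ + c_w`, whose systematic
part is zero.  If `B` (enumerated by the injection `β`, `|B| = μ`) contains the
support of `e_sys`, the positions `G` (enumerated by the injection `γ`) carry
no redundancy errors (`e_red|_G = 0`), and the `μ×μ` submatrix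
`D = G_R[B, G]` is invertible, then `e_sys|_B = r|_G · D⁻¹`, which (together
with `e_sys` vanishing outside `B`) determines `e_sys` and hence the codeword
completely. -/
theorem redundancy_set_decoding_correct (n k μ : ℕ) (hk : k < n)
    (GR : Matrix (Fin k) (Fin (n - k)) (ZMod 2))
    (u : Fin k → ZMod 2)
    (ered : Fin (n - k) → ZMod 2) (esys : Fin k → ZMod 2)
    (β : Fin μ → Fin k) (hβ : Function.Injective β)
    (γ : Fin μ → Fin (n - k)) (hγ : Function.Injective γ)
    (hsupp : ∀ i : Fin k, esys i ≠ 0 → ∃ t, β t = i)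
    (hered : ∀ t, ered (γ t) = 0)
    (hD : IsUnit (GR.submatrix β γ).det) :
    ∀ t : Fin μ, esys (β t) =
      Matrix.vecMul
        (fun s => (Matrix.vecMul u GR + ered + Matrix.vecMul (u + esys) GR) (γ s))
        (GR.submatrix β γ)⁻¹ t :=
  redundancy_set_decoding_correct_general n k μ GR u ered esys β hβ γ hsupp hered hD
end
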